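/- Let T be a finite tree with positive vertex weights and positive edge lengths, and let c be any vertex of T. If v' is a vertex in the subtree T_t(c) (for some neighbor t of c) satisfying w(v')·d(v',c) = max_{v∈V} w(v)·d(v,c), then every weighted 1-center of T lies in the closed subtree T_t(c⁺), i.e., in T_t(c) together with the vertex c and the edge (c,t). -/
import Mathlib


/-- Length of a walk with respect to edge lengths `ℓ`. -/
def walkLength {V : Type*} {G : SimpleGraph V} (ℓ : V → V → ℝ) :
    ∀ {u v : V}, G.Walk u v → ℝ :=
  fun p => (p.darts.map fun d => ℓ d.toProd.1 d.toProd.2).sum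

/-- Shortest-path distance between vertices of `G` with edge lengths `ℓ`. -/
noncomputable def vdist {V : Type*} (G : SimpleGraph V) (ℓ : V → V → ℝ) (u v : V) : ℝ :=
  sInf {x | ∃ p : G.Walk u v, x = walkLength ℓ p}

/-- Distance from the point on edge `(u,v)` at parameter `s ∈ [0,1]` to vertex `z`. -/
noncomputable def pdist {V : Type*} (G : SimpleGraph V) (ℓ : V → V → ℝ)
    (u v : V) (s : ℝ) (z : V) : ℝ :=
  min (s * ℓ u v + vdist G ℓ u z) ((1 - s) * ℓ u v + vdist G ℓ v z)

/-- The vertices of the connected component of `G - v` containing `t`. -/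
def branch {V : Type*} (G : SimpleGraph V) (v t : V) : Set V :=
  {u | ∃ p : G.Walk t u, v ∉ p.support}

/-- The maximum weighted distance `max_z w(z)·d(x,z)` from the point on edge `(u,v)`
at parameter `s`. -/
noncomputable def eccOn {V : Type*} [Fintype V] [Nonempty V] (G : SimpleGraph V)
    (ℓ : V → V → ℝ) (w : V → ℝ) (u v : V) (s : ℝ) : ℝ :=
  Finset.univ.sup' Finset.univ_nonempty fun z => w z * pdist G ℓ u v s z

open SimpleGraph

section Aux
variable {V : Type*} [DecidableEq V] {G : SimpleGraph V} {ℓ : V → V → ℝ}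

lemma walkLength_nil {u : V} : walkLength ℓ (Walk.nil : G.Walk u u) = 0 := rfl

lemma walkLength_cons {u x v : V} (h : G.Adj u x) (p : G.Walk x v) :
    walkLength ℓ (Walk.cons h p) = ℓ u x + walkLength ℓ p := by
  simp [walkLength]

lemma walkLength_append {u v x : V} (p : G.Walk u v) (q : G.Walk v x) :
    walkLength ℓ (p.append q) = walkLength ℓ p + walkLength ℓ q := by
  simp [walkLength, Walk.darts_append]

lemma walkLength_nonneg (hℓpos : ∀ u v, G.Adj u v → 0 < ℓ u v) {u v : V} (p : G.Walk u v) :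
    0 ≤ walkLength ℓ p := by
  induction p with
  | nil => simp [walkLength_nil]
  | cons h p ih => rw [walkLength_cons]; have := hℓpos _ _ h; linarith

lemma walkLength_pos (hℓpos : ∀ u v, G.Adj u v → 0 < ℓ u v) {u v : V} (p : G.Walk u v)
    (hne : u ≠ v) : 0 < walkLength ℓ p := by
  cases p with
  | nil => exact absurd rfl hne
  | cons h p =>
    rw [walkLength_cons]
    have := hℓpos _ _ h
    have := walkLength_nonneg hℓpos p
    linarith

noncomputable def treePath (hG : G.IsTree) (u v : V) : G.Walk u v :=
  (hG.existsUnique_path u v).exists.choose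

lemma treePath_isPath (hG : G.IsTree) (u v : V) : (treePath hG u v).IsPath :=
  (hG.existsUnique_path u v).exists.choose_spec

lemma treePath_unique (hG : G.IsTree) {u v : V} (p : G.Walk u v) (hp : p.IsPath) :
    p = treePath hG u v :=
  (hG.existsUnique_path u v).unique hp (treePath_isPath hG u v)

noncomputable def pathLen (hG : G.IsTree) (ℓ : V → V → ℝ) (u v : V) : ℝ :=
  walkLength ℓ (treePath hG u v)

lemma pathLen_self (hG : G.IsTree) (u : V) : pathLen hG ℓ u u = 0 := by
  rw [pathLen, ← treePath_unique hG Walk.nil Walk.IsPath.nil, walkLength_nil]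

lemma pathLen_adj (hG : G.IsTree) {u v : V} (h : G.Adj u v) : pathLen hG ℓ u v = ℓ u v := by
  have hp : (Walk.cons h Walk.nil).IsPath := by simp [h.ne]
  rw [pathLen, ← treePath_unique hG _ hp, walkLength_cons, walkLength_nil, add_zero]

lemma pathLen_le_adj (hG : G.IsTree) (hℓpos : ∀ u v, G.Adj u v → 0 < ℓ u v)
    {u x : V} (h : G.Adj u x) (v : V) :
    pathLen hG ℓ u v ≤ ℓ u x + pathLen hG ℓ x v := by
  by_cases hu : u ∈ (treePath hG x v).support
  · have hdrop : ((treePath hG x v).dropUntil u hu).IsPath :=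
      (treePath_isPath hG x v).dropUntil hu
    have h1 : pathLen hG ℓ u v = walkLength ℓ ((treePath hG x v).dropUntil u hu) := by
      rw [pathLen, ← treePath_unique hG _ hdrop]
    have h2 : pathLen hG ℓ x v
        = walkLength ℓ ((treePath hG x v).takeUntil u hu)
          + walkLength ℓ ((treePath hG x v).dropUntil u hu) := by
      rw [pathLen, ← walkLength_append]
      congr 1
      exact (Walk.take_spec _ hu).symm
    have h3 := walkLength_nonneg hℓpos ((treePath hG x v).takeUntil u hu)
    have := hℓpos _ _ h
    linarith
  · have hp : (Walk.cons h (treePath hG x v)).IsPath :=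
      (treePath_isPath hG x v).cons hu
    rw [pathLen, ← treePath_unique hG _ hp, walkLength_cons]
    exact le_of_eq rfl

lemma pathLen_le_walkLength (hG : G.IsTree) (hℓpos : ∀ u v, G.Adj u v → 0 < ℓ u v)
    {u v : V} (p : G.Walk u v) : pathLen hG ℓ u v ≤ walkLength ℓ p := by
  induction p with
  | nil => rw [pathLen_self, walkLength_nil]
  | cons h p ih =>
    rw [walkLength_cons]
    calc pathLen hG ℓ _ _ ≤ _ := pathLen_le_adj hG hℓpos h _
    _ ≤ _ := by linarith

lemma vdist_eq (hG : G.IsTree) (hℓpos : ∀ u v, G.Adj u v → 0 < ℓ u v) (u v : V) :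
    vdist G ℓ u v = pathLen hG ℓ u v := by
  apply le_antisymm
  · exact csInf_le ⟨pathLen hG ℓ u v, fun x ⟨p, hp⟩ => hp ▸ pathLen_le_walkLength hG hℓpos p⟩
      ⟨treePath hG u v, rfl⟩
  · exact le_csInf ⟨_, treePath hG u v, rfl⟩
      (fun x ⟨p, hp⟩ => hp ▸ pathLen_le_walkLength hG hℓpos p)

lemma pathLen_symm (hG : G.IsTree) (hℓsym : ∀ u v, ℓ u v = ℓ v u) (u v : V) :
    pathLen hG ℓ u v = pathLen hG ℓ v u := by
  have hp : (treePath hG u v).reverse.IsPath := (treePath_isPath hG u v).reverse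
  rw [pathLen, pathLen, ← treePath_unique hG _ hp, walkLength, walkLength,
    Walk.darts_reverse, List.map_reverse, List.sum_reverse, List.map_map]
  congr 1
  apply List.map_congr_left
  intro d _
  simp only [Function.comp_apply, Dart.symm_toProd, Prod.fst_swap, Prod.snd_swap]
  exact (hℓsym _ _).symm

lemma pathLen_split (hG : G.IsTree) {u v c : V} (hc : c ∈ (treePath hG u v).support) :
    pathLen hG ℓ u v = pathLen hG ℓ u c + pathLen hG ℓ c v := by
  have h1 : ((treePath hG u v).takeUntil c hc).IsPath :=
    (treePath_isPath hG u v).takeUntil hc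
  have h2 : ((treePath hG u v).dropUntil c hc).IsPath :=
    (treePath_isPath hG u v).dropUntil hc
  rw [pathLen, pathLen, pathLen, ← treePath_unique hG _ h1, ← treePath_unique hG _ h2,
    ← walkLength_append]
  congr 1
  exact (Walk.take_spec _ hc).symm

end Aux

section Aux2
variable {V : Type*} [DecidableEq V] {G : SimpleGraph V} {ℓ : V → V → ℝ}

lemma pathLen_pos (hG : G.IsTree) (hℓpos : ∀ u v, G.Adj u v → 0 < ℓ u v)
    {u v : V} (hne : u ≠ v) : 0 < pathLen hG ℓ u v :=
  walkLength_pos hℓpos _ hne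

omit [DecidableEq V] in
lemma c_notMem_branch {c t : V} : c ∉ branch G c t :=
  fun ⟨p, hp⟩ => hp (Walk.end_mem_support p)

omit [DecidableEq V] in
lemma branch_adj {c t a b : V} (ha : a ∈ branch G c t) (h : G.Adj a b) (hb : b ≠ c) :
    b ∈ branch G c t := by
  obtain ⟨p, hp⟩ := ha
  refine ⟨p.append (Walk.cons h Walk.nil), ?_⟩
  rw [Walk.mem_support_append_iff]
  rintro (hc | hc)
  · exact hp hc
  · simp only [Walk.support_cons, Walk.support_nil, List.mem_cons, List.not_mem_nil,
      or_false, List.mem_singleton] at hc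
    rcases hc with rfl | rfl
    · exact hp (Walk.end_mem_support p)
    · exact hb rfl

omit [DecidableEq V] in
lemma c_mem_walk {c t v' x : V} (hv' : v' ∈ branch G c t) (hx : x ∉ branch G c t)
    (q : G.Walk v' x) : c ∈ q.support := by
  by_contra hc
  obtain ⟨p, hp⟩ := hv'
  refine hx ⟨p.append q, ?_⟩
  rw [Walk.mem_support_append_iff]
  rintro (h | h)
  · exact hp h
  · exact hc h

lemma pathLen_split_c (hG : G.IsTree) {c t v' x : V} (hv' : v' ∈ branch G c t)
    (hx : x ∉ branch G c t) :
    pathLen hG ℓ v' x = pathLen hG ℓ v' c + pathLen hG ℓ c x :=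
  pathLen_split hG (c_mem_walk hv' hx (treePath hG v' x))

end Aux2


/-- If `v'` is a vertex of the subtree `T_t(c)` attaining `max_v w(v)·d(v,c)`, then every
weighted 1-center of the tree lies in the closed subtree `T_t(c⁺)` (the component of
`T - c` containing `t`, together with `c` and the edge `(c,t)`). -/
theorem stmt12 {V : Type*} [Fintype V] [DecidableEq V] [Nonempty V]
    (G : SimpleGraph V) (hG : G.IsTree)
    (w : V → ℝ) (hw : ∀ v, 0 < w v)
    (ℓ : V → V → ℝ) (hℓsym : ∀ u v, ℓ u v = ℓ v u)
    (hℓpos : ∀ u v, G.Adj u v → 0 < ℓ u v)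
    (c t v' : V) (ht : G.Adj c t) (hv' : v' ∈ branch G c t)
    (hmax : ∀ z : V, w z * vdist G ℓ z c ≤ w v' * vdist G ℓ v' c)
    -- `(a, b, s)` is a weighted 1-center of the tree:
    (a b : V) (s : ℝ) (hab : G.Adj a b) (hs : s ∈ Set.Icc (0:ℝ) 1)
    (hcenter : ∀ a' b' : V, G.Adj a' b' → ∀ s' ∈ Set.Icc (0:ℝ) 1,
      eccOn G ℓ w a b s ≤ eccOn G ℓ w a' b' s') :
    (s = 0 ∧ a = c) ∨ (s = 1 ∧ b = c) ∨
      (a ∈ insert c (branch G c t) ∧ b ∈ insert c (branch G c t)) := by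
  by_contra hcon
  push_neg at hcon
  obtain ⟨h0, h1, h2⟩ := hcon
  set S : Set V := insert c (branch G c t) with hS
  set D : ℝ := pathLen hG ℓ v' c with hD
  have hveq : ∀ u v : V, vdist G ℓ u v = pathLen hG ℓ u v := vdist_eq hG hℓpos
  have hsymm : ∀ u v : V, pathLen hG ℓ u v = pathLen hG ℓ v u := pathLen_symm hG hℓsym
  -- key: D < pdist G ℓ a b s v'
  have hkey : D < pdist G ℓ a b s v' := by
    have hout : ∀ x : V, x ∉ S → pathLen hG ℓ x v' = pathLen hG ℓ c x + D := by
      intro x hx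
      have hxb : x ∉ branch G c t := fun h => hx (Set.mem_insert_iff.mpr (Or.inr h))
      rw [hsymm x v', pathLen_split_c hG hv' hxb, add_comm]
    have edgecase : ∀ x y : V, x ∈ S → y ∉ S → G.Adj x y → x = c := by
      intro x y hx hy hxy
      rcases Set.mem_insert_iff.mp hx with rfl | hx'
      · rfl
      · have hyc : y ≠ c := fun h => hy (h ▸ Set.mem_insert c _)
        exact absurd (Set.mem_insert_iff.mpr (Or.inr (branch_adj hx' hxy hyc)))
          hy
    simp only [pdist, hveq]
    by_cases haS : a ∈ S
    · -- then b ∉ S, so a = c, s ≠ 0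
      have hbS : b ∉ S := fun h => (h2 haS) h
      have hac : a = c := edgecase a b haS hbS hab
      have hs0 : s ≠ 0 := fun h => h0 h hac
      have hspos : 0 < s := lt_of_le_of_ne hs.1 (Ne.symm hs0)
      have hℓab : 0 < ℓ a b := hℓpos a b hab
      have hbv : pathLen hG ℓ b v' = pathLen hG ℓ c b + D := hout b hbS
      have hcb : 0 < pathLen hG ℓ c b := by
        subst hac; rw [pathLen_adj hG hab]; exact hℓab
      apply lt_min
      · have : pathLen hG ℓ a v' = D := by subst hac; rw [hsymm]
        nlinarith
      · nlinarith [hs.2]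
    · by_cases hbS : b ∈ S
      · -- symmetric: b = c, s ≠ 1
        have hbc : b = c := edgecase b a hbS haS hab.symm
        have hs1 : s ≠ 1 := fun h => h1 h hbc
        have hslt : s < 1 := lt_of_le_of_ne hs.2 hs1
        have hℓab : 0 < ℓ a b := hℓpos a b hab
        have hav : pathLen hG ℓ a v' = pathLen hG ℓ c a + D := hout a haS
        have hca : 0 < pathLen hG ℓ c a := by
          subst hbc; rw [hsymm, pathLen_adj hG hab]; exact hℓab
        apply lt_min
        · nlinarith [hs.1]
        · have : pathLen hG ℓ b v' = D := by subst hbc; rw [hsymm]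
          nlinarith
      · -- both outside
        have hℓab : 0 < ℓ a b := hℓpos a b hab
        have hav : pathLen hG ℓ a v' = pathLen hG ℓ c a + D := hout a haS
        have hbv : pathLen hG ℓ b v' = pathLen hG ℓ c b + D := hout b hbS
        have hca : 0 < pathLen hG ℓ c a :=
          pathLen_pos hG hℓpos (fun h => haS (h ▸ Set.mem_insert c _))
        have hcb : 0 < pathLen hG ℓ c b :=
          pathLen_pos hG hℓpos (fun h => hbS (h ▸ Set.mem_insert c _))
        apply lt_min
        · nlinarith [hs.1]
        · nlinarith [hs.2]
  -- eccOn at (c, t, 0) is at most w v' * D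
  have hecc1 : eccOn G ℓ w c t 0 ≤ w v' * D := by
    apply Finset.sup'_le
    intro z _
    have hpz : pdist G ℓ c t 0 z ≤ vdist G ℓ c z := by
      calc pdist G ℓ c t 0 z ≤ 0 * ℓ c t + vdist G ℓ c z := min_le_left _ _
      _ = vdist G ℓ c z := by ring
    have hzc : vdist G ℓ c z = vdist G ℓ z c := by rw [hveq, hveq, hsymm]
    calc w z * pdist G ℓ c t 0 z ≤ w z * vdist G ℓ c z :=
          mul_le_mul_of_nonneg_left hpz (le_of_lt (hw z))
    _ = w z * vdist G ℓ z c := by rw [hzc]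
    _ ≤ w v' * vdist G ℓ v' c := hmax z
    _ = w v' * D := by rw [hveq]
  have hecc2 : w v' * pdist G ℓ a b s v' ≤ eccOn G ℓ w a b s :=
    Finset.le_sup' (fun z => w z * pdist G ℓ a b s z) (Finset.mem_univ v')
  have hc := hcenter c t ht 0 ⟨le_refl 0, zero_le_one⟩
  have hstrict : w v' * D < w v' * pdist G ℓ a b s v' :=
    mul_lt_mul_of_pos_left hkey (hw v')
  linarith
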